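/- Let R be a commutative ring, S ⊆ reg(R) a multiplicatively closed subset of non-zero-divisors, and I an S-n-ideal of R with S-element s. Then (I : s) is an n-ideal of R. -/

import Mathlib

/-- `I` is an `S`-`n`-ideal: `I` is disjoint from `S` and there is `s ∈ S` such that
whenever `a * b ∈ I` and `s * a` is not nilpotent, then `s * b ∈ I`. -/
def IsSnIdeal {R : Type*} [CommRing R] (S : Set R) (I : Ideal R) : Prop :=
  Disjoint S (I : Set R) ∧
    ∃ s ∈ S, ∀ a b : R, a * b ∈ I → s * a ∉ nilradical R → s * b ∈ I

/-- `I` is an `n`-ideal: `I` is proper and `a * b ∈ I` with `a` not nilpotent implies `b ∈ I`. -/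
def IsNIdeal {R : Type*} [CommRing R] (I : Ideal R) : Prop :=
  I ≠ ⊤ ∧ ∀ a b : R, a * b ∈ I → a ∉ nilradical R → b ∈ I

/-- `I` is an `S`-prime ideal. -/
def IsSPrime {R : Type*} [CommRing R] (S : Set R) (I : Ideal R) : Prop :=
  Disjoint S (I : Set R) ∧
    ∃ s ∈ S, ∀ a b : R, a * b ∈ I → s * a ∈ I ∨ s * b ∈ I
theorem mul_mem_nilradical_iff_of_mem_nonZeroDivisors {R : Type*} [CommRing R] {s x : R}
    (hs : s ∈ nonZeroDivisors R) : s * x ∈ nilradical R ↔ x ∈ nilradical R := by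
  simpa only [mem_nilradical] using (Commute.all s x).isNilpotent_mul_left_iff hs.1

theorem isNIdeal_colon_span_singleton {R : Type*} [CommRing R] {I : Ideal R} {s : R}
    (hs : s ∈ nonZeroDivisors R) (hsI : s ∉ I)
    (h : ∀ a b : R, a * b ∈ I → s * a ∉ nilradical R → s * b ∈ I) :
    IsNIdeal (I.colon (Ideal.span {s})) := by
  refine ⟨fun htop => hsI ?_, fun a b hab ha => ?_⟩
  · simpa using (Ideal.eq_top_iff_one _).mp htop
  · rw [Ideal.mem_colon_span_singleton] at hab ⊢
    -- Feeding `h` the factor `a * s` rather than `a` yields `s * b ∈ I` instead of `s * (s * b) ∈ I`.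
    have hsas : s * (a * s) ∉ nilradical R := by
      rwa [mul_comm a, mul_mem_nilradical_iff_of_mem_nonZeroDivisors hs,
        mul_mem_nilradical_iff_of_mem_nonZeroDivisors hs]
    rw [mul_comm]
    exact h (a * s) b (by rwa [mul_right_comm]) hsas

theorem stmt_6 {R : Type*} [CommRing R] (S : Submonoid R) (I : Ideal R)
    (hreg : (S : Set R) ⊆ {r : R | r ∈ nonZeroDivisors R})
    (hdisj : Disjoint (S : Set R) (I : Set R)) (s : R) (hs : s ∈ S)
    (hsI : ∀ a b : R, a * b ∈ I → s * a ∉ nilradical R → s * b ∈ I) :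
    IsNIdeal (I.colon (Ideal.span {s})) :=
  isNIdeal_colon_span_singleton (hreg hs) (Set.disjoint_left.mp hdisj hs) hsI
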